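/- For any J, J' : S → ℝ and any positive integer k, the k-fold iterate of B_m satisfies max_{i ∈ S} |(B_m^k J)(i) − (B_m^k J')(i)| ≤ α^k · max_{i ∈ S} |J(i) − J'(i)|. -/

import Mathlib

/-!
Row `i` of `B_m J` is a Bellman backup in which the states `j ∈ M_m(i)`, all of index below `i`,
take the already computed values `(B_m J)(j)` and the others take `J(j)`. A Bellman backup with
nonnegative weights of total mass at most one moves by at most `α D` when every input moves by at
most `D`. By strong induction on `i` the inputs of every row move by at most `max (α D) D = D`
when `α ≤ 1`, so `B_m` is an `α`-contraction for the sup distance, and iterating gives `α ^ k`.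
-/

open Finset Filter

/-- The randomized mini-batch Bellman operator `B_m`. States are `Fin n`
(0-indexed version of `{1,…,n}`); the set `M_m(i)` of already-updated states
consists of the `j` with `(j : ℕ) < m * (i / m)` (the 0-indexed version of
`{1,…,m⌊(i-1)/m⌋}`). The operator is defined recursively in `i`. -/
noncomputable def Bm (n m : ℕ) (U : Fin n → Finset ℕ) (hU : ∀ i, (U i).Nonempty)
    (p : Fin n → ℕ → Fin n → ℝ) (g : Fin n → ℕ → ℝ) (α : ℝ)
    (J : Fin n → ℝ) (i : Fin n) : ℝ :=
  (U i).inf' (hU i) fun u =>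
    g i u
      + α * ∑ j : Fin n, (if (j : ℕ) < m * ((i : ℕ) / m) then 0 else p i u j * J j)
      + α * ∑ j : {j : Fin n // (j : ℕ) < m * ((i : ℕ) / m)},
          p i u j.1 * Bm n m U hU p g α J j.1
termination_by (i : ℕ)
decreasing_by exact lt_of_lt_of_le j.2 (Nat.mul_div_le _ _)

/-- The standard Bellman operator `T`. -/
noncomputable def Bell (n : ℕ) (U : Fin n → Finset ℕ) (hU : ∀ i, (U i).Nonempty)
    (p : Fin n → ℕ → Fin n → ℝ) (g : Fin n → ℕ → ℝ) (α : ℝ)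
    (J : Fin n → ℝ) (i : Fin n) : ℝ :=
  (U i).inf' (hU i) fun u => g i u + α * ∑ j : Fin n, p i u j * J j

theorem Finset.abs_inf'_sub_inf'_le {ι R : Type*} [AddCommGroup R] [LinearOrder R]
    [IsOrderedAddMonoid R] {s : Finset ι} (hs : s.Nonempty) {f f' : ι → R} {c : R}
    (h : ∀ u ∈ s, |f u - f' u| ≤ c) : |s.inf' hs f - s.inf' hs f'| ≤ c := by
  rw [abs_sub_le_iff]
  constructor
  · obtain ⟨u, hu, hu'⟩ := s.exists_mem_eq_inf' hs f'
    rw [hu']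
    calc s.inf' hs f - f' u ≤ f u - f' u := sub_le_sub_right (inf'_le _ hu) _
      _ ≤ c := (le_abs_self _).trans (h u hu)
  · obtain ⟨u, hu, hu'⟩ := s.exists_mem_eq_inf' hs f
    rw [hu']
    calc s.inf' hs f' - f u ≤ f' u - f u := sub_le_sub_right (inf'_le _ hu) _
      _ ≤ c := (le_abs_self _).trans ((abs_sub_comm _ _).trans_le (h u hu))

theorem abs_sum_mul_le_of_sum_le_one {ι : Type*} [Fintype ι] {w x : ι → ℝ} {D : ℝ}
    (hw : ∀ j, 0 ≤ w j) (hw1 : ∑ j, w j ≤ 1) (hD : 0 ≤ D) (hx : ∀ j, |x j| ≤ D) :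
    |∑ j, w j * x j| ≤ D :=
  calc |∑ j, w j * x j| ≤ ∑ j, w j * D := by
        refine (abs_sum_le_sum_abs _ _).trans (sum_le_sum fun j _ => ?_)
        rw [abs_mul, abs_of_nonneg (hw j)]
        exact mul_le_mul_of_nonneg_left (hx j) (hw j)
    _ = (∑ j, w j) * D := (sum_mul _ _ _).symm
    _ ≤ D := mul_le_of_le_one_left hD hw1

theorem abs_bellman_backup_sub_le {ι κ : Type*} [Fintype ι] {s : Finset κ} (hs : s.Nonempty)
    {p : κ → ι → ℝ} (hp : ∀ u j, 0 ≤ p u j) (hp1 : ∀ u, ∑ j, p u j ≤ 1) (g : κ → ℝ)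
    {α D : ℝ} (hα : 0 ≤ α) (hD : 0 ≤ D) {x x' : ι → ℝ} (hx : ∀ j, |x j - x' j| ≤ D) :
    |s.inf' hs (fun u => g u + α * ∑ j, p u j * x j)
      - s.inf' hs (fun u => g u + α * ∑ j, p u j * x' j)| ≤ α * D := by
  refine s.abs_inf'_sub_inf'_le hs fun u _ => ?_
  calc |g u + α * ∑ j, p u j * x j - (g u + α * ∑ j, p u j * x' j)|
        = |α * ∑ j, p u j * (x j - x' j)| := by
          congr 1; simp only [mul_sub, sum_sub_distrib]; ring
    _ = α * |∑ j, p u j * (x j - x' j)| := by rw [abs_mul, abs_of_nonneg hα]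
    _ ≤ α * D := mul_le_mul_of_nonneg_left (abs_sum_mul_le_of_sum_le_one (hp u) (hp1 u) hD hx) hα

section MiniBatch

variable {n m : ℕ} {U : Fin n → Finset ℕ} {hU : ∀ i, (U i).Nonempty}
  {p : Fin n → ℕ → Fin n → ℝ} {g : Fin n → ℕ → ℝ} {α : ℝ}

theorem Bm_eq (J : Fin n → ℝ) (i : Fin n) :
    Bm n m U hU p g α J i = (U i).inf' (hU i) fun u => g i u + α * ∑ j, p i u j *
      if (j : ℕ) < m * ((i : ℕ) / m) then Bm n m U hU p g α J j else J j := by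
  rw [Bm]
  congr 1
  funext u
  rw [add_assoc, ← mul_add,
    ← sum_subtype (univ.filter fun j : Fin n => (j : ℕ) < m * ((i : ℕ) / m)) (by simp)
      (fun j => p i u j * Bm n m U hU p g α J j),
    sum_filter, ← sum_add_distrib]
  congr 2
  refine sum_congr rfl fun j _ => ?_
  split_ifs <;> ring

theorem abs_Bm_sub_le (hp : ∀ i u j, 0 ≤ p i u j) (hp1 : ∀ i u, ∑ j, p i u j ≤ 1)
    (hα0 : 0 ≤ α) (hα1 : α ≤ 1) {J J' : Fin n → ℝ} {D : ℝ} (hD : 0 ≤ D)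
    (hJ : ∀ j, |J j - J' j| ≤ D) (i : Fin n) :
    |Bm n m U hU p g α J i - Bm n m U hU p g α J' i| ≤ α * D := by
  induction i using WellFoundedLT.induction with
  | _ i ih =>
  rw [Bm_eq J, Bm_eq J']
  refine abs_bellman_backup_sub_le (hU i) (hp i) (hp1 i) (g i) hα0 hD fun j => ?_
  split_ifs with hj
  · have hji : j < i := Fin.lt_def.mpr (hj.trans_le (Nat.mul_div_le _ _))
    exact (ih j hji).trans (mul_le_of_le_one_left hD hα1)
  · exact hJ j

theorem abs_Bm_iterate_sub_le (hp : ∀ i u j, 0 ≤ p i u j) (hp1 : ∀ i u, ∑ j, p i u j ≤ 1)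
    (hα0 : 0 ≤ α) (hα1 : α ≤ 1) {J J' : Fin n → ℝ} {D : ℝ} (hD : 0 ≤ D)
    (hJ : ∀ j, |J j - J' j| ≤ D) (k : ℕ) (i : Fin n) :
    |(Bm n m U hU p g α)^[k] J i - (Bm n m U hU p g α)^[k] J' i| ≤ α ^ k * D := by
  induction k generalizing i with
  | zero => simpa using hJ i
  | succ k ih =>
    rw [Function.iterate_succ_apply', Function.iterate_succ_apply', pow_succ', mul_assoc]
    exact abs_Bm_sub_le hp hp1 hα0 hα1 (by positivity) ih i

end MiniBatch

theorem Bm_iterate_contraction_general (n m : ℕ)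
    (U : Fin n → Finset ℕ) (hU : ∀ i, (U i).Nonempty)
    (p : Fin n → ℕ → Fin n → ℝ) (hp : ∀ i u j, 0 ≤ p i u j)
    (hpsum : ∀ i u, ∑ j : Fin n, p i u j = 1)
    (g : Fin n → ℕ → ℝ) (α : ℝ) (hα0 : 0 < α) (hα1 : α < 1)
    (J J' : Fin n → ℝ) (k : ℕ) :
    (⨆ i : Fin n, |(Bm n m U hU p g α)^[k] J i - (Bm n m U hU p g α)^[k] J' i|)
      ≤ α ^ k * ⨆ i : Fin n, |J i - J' i| := by
  have hD : 0 ≤ ⨆ i, |J i - J' i| := Real.iSup_nonneg fun i => abs_nonneg _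
  have hJ : ∀ j, |J j - J' j| ≤ ⨆ i, |J i - J' i| := le_ciSup (Finite.bddAbove_range _)
  exact Real.iSup_le
    (abs_Bm_iterate_sub_le hp (fun i u => (hpsum i u).le) hα0.le hα1.le hD hJ k) (by positivity)

/-- `α^k`-contractivity of the `k`-fold iterate of the mini-batch operator. -/
theorem Bm_iterate_contraction (n m : ℕ) (hm1 : 1 ≤ m) (hmn : m ≤ n)
    (U : Fin n → Finset ℕ) (hU : ∀ i, (U i).Nonempty)
    (p : Fin n → ℕ → Fin n → ℝ) (hp : ∀ i u j, 0 ≤ p i u j)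
    (hpsum : ∀ i u, ∑ j : Fin n, p i u j = 1)
    (g : Fin n → ℕ → ℝ) (α : ℝ) (hα0 : 0 < α) (hα1 : α < 1)
    (J J' : Fin n → ℝ) (k : ℕ) (hk : 1 ≤ k) :
    (⨆ i : Fin n, |(Bm n m U hU p g α)^[k] J i - (Bm n m U hU p g α)^[k] J' i|)
      ≤ α ^ k * ⨆ i : Fin n, |J i - J' i| :=
  Bm_iterate_contraction_general n m U hU p hp hpsum g α hα0 hα1 J J' k
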